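/- Let M be a CG lattice L-module and N a proper element of M. The following are equivalent: (1) N is classical prime; (2) for every a, b ∈ L, either (N:ab) = (N:a) or (N:ab) = (N:b); (3) for every compact r, s ∈ L and compact K ∈ M, rsK ≤ N implies rK ≤ N or sK ≤ N. -/
import Mathlib


open CompleteLattice

universe u v

/-- A multiplicative lattice: a complete lattice with a commutative, associative
multiplication distributing over arbitrary joins, whose greatest element `⊤` is the
multiplicative identity `1`.  Following the standing assumptions of the paper, we also
require that the lattice is compactly generated, that `1` is compact and that finite
products of compact elements are compact. -/
class MultiplicativeLattice (L : Type u) extends CompleteLattice L, CommMonoid L where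
  mul_sSup : ∀ (a : L) (S : Set L), a * sSup S = ⨆ b ∈ S, a * b
  one_eq_top : (1 : L) = ⊤
  compactlyGenerated : ∀ a : L, a = sSup {c : L | IsCompactElement c ∧ c ≤ a}
  top_compact : IsCompactElement (⊤ : L)
  mul_compact : ∀ a b : L, IsCompactElement a → IsCompactElement b →
    IsCompactElement (a * b)

/-- A lattice module `M` over a multiplicative lattice `L`. -/
class LatticeModule (L : Type u) [MultiplicativeLattice L] (M : Type v)
    extends CompleteLattice M, SMul L M where
  sSup_smul : ∀ (S : Set L) (A : M), (SupSet.sSup S : L) • A = ⨆ a ∈ S, a • A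
  smul_sSup : ∀ (a : L) (S : Set M), a • (sSup S) = ⨆ B ∈ S, a • B
  mul_smul : ∀ (a b : L) (A : M), (a * b) • A = a • b • A
  one_smul : ∀ A : M, (1 : L) • A = A
  bot_smul : ∀ A : M, (⊥ : L) • A = (⊥ : M)

section LDefs

variable {L : Type u} [MultiplicativeLattice L]

/-- The residual `(a : b)` in `L`. -/
def lcolon (a b : L) : L := sSup {x : L | x * b ≤ a}

/-- The radical `√a` of an element of `L`. -/
def lrad (a : L) : L :=
  sSup {x : L | IsCompactElement x ∧ ∃ n : ℕ, 0 < n ∧ x ^ n ≤ a}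

/-- A prime element of `L`: proper, and `a * b ≤ p` implies `a ≤ p` or `b ≤ p`. -/
def IsPrimeL (p : L) : Prop :=
  p < 1 ∧ ∀ a b : L, a * b ≤ p → a ≤ p ∨ b ≤ p

/-- A primary element of `L`: proper, and for compact `a, b`, `a * b ≤ q` implies
`a ≤ q` or `b ^ n ≤ q` for some positive `n`. -/
def IsPrimaryL (q : L) : Prop :=
  q < 1 ∧ ∀ a b : L, IsCompactElement a → IsCompactElement b → a * b ≤ q →
    a ≤ q ∨ ∃ n : ℕ, 0 < n ∧ b ^ n ≤ q

/-- A principal element of `L` (meet principal and join principal). -/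
def IsPrincipalElemL (e : L) : Prop :=
  (∀ a b : L, a ⊓ b * e = (lcolon a e ⊓ b) * e) ∧
  (∀ a b : L, lcolon (a * e ⊔ b) e = lcolon b e ⊔ a)

end LDefs

/-- `L` is a PG-lattice: every element is a join of principal elements. -/
def IsPGLattice (L : Type u) [MultiplicativeLattice L] : Prop :=
  ∀ a : L, a = sSup {p : L | IsPrincipalElemL p ∧ p ≤ a}

section MDefs

variable (L : Type u) {M : Type v} [MultiplicativeLattice L] [LatticeModule L M]

/-- The residual `(A : B) ∈ L` of two elements of `M`. -/
def colon (A B : M) : L := sSup {x : L | x • B ≤ A}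

/-- The residual `(N : a) ∈ M` of an element of `M` by an element of `L`. -/
def mcolon (N : M) (a : L) : M := sSup {X : M | a • X ≤ N}

/-- A prime element of `M`. -/
def IsPrimeM (N : M) : Prop :=
  N < ⊤ ∧ ∀ (a : L) (X : M), a • X ≤ N → X ≤ N ∨ a • (⊤ : M) ≤ N

/-- A primary element of `M`. -/
def IsPrimaryM (N : M) : Prop :=
  N < ⊤ ∧ ∀ (a : L) (X : M), a • X ≤ N →
    X ≤ N ∨ ∃ n : ℕ, 0 < n ∧ (a ^ n) • (⊤ : M) ≤ N

/-- The radical `rad N` of an element of `M`: the meet of all prime elements above it. -/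
def mrad (N : M) : M := sInf {P : M | IsPrimeM L P ∧ N ≤ P}

/-- A pseudo-primary element of `M`. -/
def IsPseudoPrimary (N : M) : Prop :=
  N < ⊤ ∧ ∀ (a : L) (X : M), a • X ≤ N → a ≤ colon L N ⊤ ∨ X ≤ mrad L N

/-- A classical prime element of `M`. -/
def IsClassicalPrime (N : M) : Prop :=
  N < ⊤ ∧ ∀ (a b : L) (K : M), (a * b) • K ≤ N → a • K ≤ N ∨ b • K ≤ N

/-- A pseudo-classical primary element of `M`. -/
def IsPseudoClassicalPrimary (N : M) : Prop :=
  N < ⊤ ∧ ∀ (a b : L) (K : M), (a * b) • K ≤ N → a • K ≤ N ∨ b • K ≤ mrad L N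

/-- A principal element of `M` (meet principal and join principal). -/
def IsPrincipalElem (N : M) : Prop :=
  (∀ (b : L) (B : M), (b ⊓ colon L B N) • N = b • N ⊓ B) ∧
  (∀ (b : L) (B : M), b ⊔ colon L B N = colon L (b • N ⊔ B) N)

/-- The saturation `S_p(N)` of `N` with respect to `p`. -/
def saturation (N : M) (p : L) : M :=
  sSup {X : M | ∃ c : L, ¬ c ≤ p ∧ c • X ≤ N}

variable (M)

/-- `M` is a PG-lattice `L`-module. -/
def IsPGModule : Prop := ∀ N : M, N = sSup {P : M | IsPrincipalElem L P ∧ P ≤ N}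

/-- `M` is a multiplication lattice `L`-module. -/
def IsMultiplicationModule : Prop := ∀ N : M, ∃ a : L, N = a • (⊤ : M)

/-- `M` is a faithful `L`-module. -/
def IsFaithful : Prop := colon L (⊥ : M) (⊤ : M) = (⊥ : L)

/-- `M` is a CG (compactly generated) lattice `L`-module. -/
def IsCGModule : Prop := ∀ N : M, N = sSup {K : M | IsCompactElement K ∧ K ≤ N}

end MDefs

section Aux

variable {L : Type u} {M : Type v} [MultiplicativeLattice L] [LatticeModule L M]

lemma smul_mono_l {a b : L} (A : M) (h : a ≤ b) : a • A ≤ b • A := by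
  have h1 : (sSup {a, b} : L) • A = ⨆ c ∈ ({a, b} : Set L), c • A :=
    LatticeModule.sSup_smul _ _
  have h2 : sSup ({a, b} : Set L) = b := by rw [sSup_pair, sup_eq_right.mpr h]
  rw [h2] at h1
  rw [h1]
  rw [iSup_pair]
  exact le_sup_left
  
lemma smul_mono_r (a : L) {A B : M} (h : A ≤ B) : a • A ≤ a • B := by
  have h1 : a • (sSup {A, B} : M) = ⨆ C ∈ ({A, B} : Set M), a • C :=
    LatticeModule.smul_sSup _ _
  have h2 : sSup ({A, B} : Set M) = B := by rw [sSup_pair, sup_eq_right.mpr h]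
  rw [h2] at h1
  rw [h1]
  rw [iSup_pair]
  exact le_sup_left

lemma smul_le_self (a : L) (A : M) : a • A ≤ A := by
  have := smul_mono_l (L := L) A (le_top (a := a))
  rwa [← MultiplicativeLattice.one_eq_top, LatticeModule.one_smul] at this

lemma smul_mcolon_le (N : M) (a : L) : a • mcolon L N a ≤ N := by
  rw [mcolon, LatticeModule.smul_sSup]
  exact iSup₂_le fun X hX => hX

lemma le_mcolon_iff {N X : M} {a : L} : X ≤ mcolon L N a ↔ a • X ≤ N := by
  constructor
  · intro h
    exact le_trans (smul_mono_r a h) (smul_mcolon_le N a)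
  · intro h
    exact le_sSup h

lemma smul_le_iff_compacts {a : L} {K N : M} (hCG : IsCGModule L M) :
    a • K ≤ N ↔ ∀ r : L, IsCompactElement r → r ≤ a →
      ∀ C : M, IsCompactElement C → C ≤ K → r • C ≤ N := by
  constructor
  · intro h r _ hr C _ hC
    exact le_trans (le_trans (smul_mono_l C hr) (smul_mono_r a hC)) h
  · intro h
    conv_lhs => rw [MultiplicativeLattice.compactlyGenerated a, hCG K]
    rw [LatticeModule.sSup_smul]
    refine iSup₂_le fun r hr => ?_
    rw [LatticeModule.smul_sSup]
    exact iSup₂_le fun C hC => h r hr.1 hr.2 C hC.1 hC.2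

end Aux

theorem stmt17 {L : Type u} {M : Type v} [MultiplicativeLattice L] [LatticeModule L M]
    (hCG : IsCGModule L M) (N : M) (hN : N < ⊤) :
    List.TFAE [
      IsClassicalPrime L N,
      ∀ a b : L, mcolon L N (a * b) = mcolon L N a ∨ mcolon L N (a * b) = mcolon L N b,
      ∀ (r s : L) (K : M), IsCompactElement r → IsCompactElement s → IsCompactElement K →
        (r * s) • K ≤ N → r • K ≤ N ∨ s • K ≤ N] := by
  tfae_have 1 → 2 := by
    rintro ⟨-, hP⟩ a b
    have hab : (a * b) • mcolon L N (a * b) ≤ N := smul_mcolon_le N (a * b)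
    rcases hP a b _ hab with h | h
    · left
      refine le_antisymm (le_mcolon_iff.mpr h) (le_mcolon_iff.mpr ?_)
      calc (a * b) • mcolon L N a = b • (a • mcolon L N a) := by
            rw [mul_comm, LatticeModule.mul_smul]
        _ ≤ b • N := smul_mono_r b (smul_mcolon_le N a)
        _ ≤ N := smul_le_self b N
    · right
      refine le_antisymm (le_mcolon_iff.mpr h) (le_mcolon_iff.mpr ?_)
      calc (a * b) • mcolon L N b = a • (b • mcolon L N b) := LatticeModule.mul_smul a b _
        _ ≤ a • N := smul_mono_r a (smul_mcolon_le N b)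
        _ ≤ N := smul_le_self a N
  tfae_have 2 → 3 := by
    intro h2 r s K _ _ _ hrs
    have hK : K ≤ mcolon L N (r * s) := le_mcolon_iff.mpr hrs
    rcases h2 r s with h | h
    · left; exact le_mcolon_iff.mp (h ▸ hK)
    · right; exact le_mcolon_iff.mp (h ▸ hK)
  tfae_have 3 → 1 := by
    intro h3
    refine ⟨hN, fun a b K hab => ?_⟩
    by_contra hc
    push_neg at hc
    obtain ⟨ha, hb⟩ := hc
    rw [smul_le_iff_compacts hCG] at ha hb
    push_neg at ha hb
    obtain ⟨r, hr, hra, K1, hK1, hK1K, hr1⟩ := ha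
    obtain ⟨s, hs, hsb, K2, hK2, hK2K, hs2⟩ := hb
    have hK0 : IsCompactElement (K1 ⊔ K2) := by
      have := isCompactElement_finsetSup (α := M) (f := fun i : Bool => if i then K1 else K2)
        Finset.univ (by rintro (_|_) _ <;> simpa)
      simpa [Finset.sup_univ_eq_iSup, iSup_bool_eq, sup_comm] using this
    have hle : (r * s) • (K1 ⊔ K2) ≤ N := by
      refine le_trans ?_ hab
      have h1 : r * s ≤ a * b := by
        calc r * s ≤ a * s := by
              have := MultiplicativeLattice.mul_sSup s ({r, a} : Set L)
              rw [sSup_pair, sup_eq_right.mpr hra] at this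
              rw [iSup_pair, mul_comm s a] at this
              rw [mul_comm r s]
              exact this ▸ le_sup_left
          _ ≤ a * b := by
              have := MultiplicativeLattice.mul_sSup a ({s, b} : Set L)
              rw [sSup_pair, sup_eq_right.mpr hsb] at this
              rw [iSup_pair] at this
              exact this ▸ le_sup_left
      exact le_trans (smul_mono_l _ h1) (smul_mono_r _ (sup_le hK1K hK2K))
    rcases h3 r s (K1 ⊔ K2) hr hs hK0 hle with h | h
    · exact hr1 (le_trans (smul_mono_r r le_sup_left) h)
    · exact hs2 (le_trans (smul_mono_r s le_sup_right) h)
  tfae_finish
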